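/- arXiv:2204.12780 — 3 statements merged into one kernel-verified Lean document; each statement's English description precedes it below -/
import Mathlib

section
/- If π is a feasible hole assignment pattern for a user with bandwidth ρ and MAR δ, whose leftmost hole is h_s and rightmost hole is h_e, then the set of all holes h_i with s ≤ i ≤ e is also a feasible pattern for that user. -/
def Feasible {m : ℕ} (α β : Fin m → ℝ) (ρ δ : ℝ) (π : Finset (Fin m)) : Prop :=
  π.Nonempty ∧ ρ ≤ ∑ i ∈ π, (β i - α i) ∧ ∀ i ∈ π, ∀ j ∈ π, β j - α i ≤ δ

theorem consecutive_block_feasible {m : ℕ} (α β : Fin m → ℝ)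
    (hlen : ∀ i, α i ≤ β i) (hdisj : ∀ i j : Fin m, i < j → β i ≤ α j)
    (ρ δ : ℝ) (π : Finset (Fin m)) (hπ : Feasible α β ρ δ π)
    (s e : Fin m) (hs : s ∈ π ∧ ∀ i ∈ π, s ≤ i) (he : e ∈ π ∧ ∀ i ∈ π, i ≤ e) :
    Feasible α β ρ δ (Finset.Icc s e) := by
  obtain ⟨hne, hsum, hmar⟩ := hπ
  have hsub : π ⊆ Finset.Icc s e := fun i hi =>
    Finset.mem_Icc.mpr ⟨hs.2 i hi, he.2 i hi⟩
  have hβle : ∀ j : Fin m, j ≤ e → β j ≤ β e := by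
    intro j hj
    rcases lt_or_eq_of_le hj with h | h
    · exact le_trans (hdisj j e h) (hlen e)
    · exact le_of_eq (by rw [h])
  have hαle : ∀ i : Fin m, s ≤ i → α s ≤ α i := by
    intro i hi
    rcases lt_or_eq_of_le hi with h | h
    · exact le_trans (hlen s) (hdisj s i h)
    · exact le_of_eq (by rw [h])
  refine ⟨⟨s, hsub hs.1⟩, le_trans hsum ?_, ?_⟩
  · exact Finset.sum_le_sum_of_subset_of_nonneg hsub
      (fun i _ _ => sub_nonneg.mpr (hlen i))
  · intro i hi j hj
    rw [Finset.mem_Icc] at hi hj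
    calc β j - α i ≤ β e - α s := by
          have := hβle j hj.2
          have := hαle i hi.1
          linarith
      _ ≤ δ := hmar s hs.1 e he.1
end

section
/- For a user with bandwidth ρ and MAR δ and a set H of ordered disjoint holes, a feasible pattern with respect to H exists if and only if there exist indices s1 ≤ s2 such that the consecutive block {h_{s1}, ..., h_{s2}} satisfies Σ_{i=s1}^{s2} len(h_i) ≥ ρ and β_{s2} − α_{s1} ≤ δ. -/
theorem feasible_iff_consecutive_block {m : ℕ} (α β : Fin m → ℝ)
    (hlen : ∀ i, α i ≤ β i) (hdisj : ∀ i j : Fin m, i < j → β i ≤ α j)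
    (ρ δ : ℝ) :
    (∃ π, Feasible α β ρ δ π) ↔
      ∃ s1 s2 : Fin m, s1 ≤ s2 ∧ ρ ≤ ∑ i ∈ Finset.Icc s1 s2, (β i - α i) ∧
        β s2 - α s1 ≤ δ := by
  have hβmono : ∀ i j : Fin m, i ≤ j → β i ≤ β j := by
    intro i j hij
    rcases lt_or_eq_of_le hij with h | h
    · exact (hdisj i j h).trans (hlen j)
    · exact h ▸ le_refl _
  have hαmono : ∀ i j : Fin m, i ≤ j → α i ≤ α j := by
    intro i j hij
    rcases lt_or_eq_of_le hij with h | h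
    · exact (hlen i).trans (hdisj i j h)
    · exact h ▸ le_refl _
  constructor
  · rintro ⟨π, hne, hsum, hmax⟩
    set s1 := π.min' hne
    set s2 := π.max' hne
    refine ⟨s1, s2, π.min'_le _ (π.max'_mem hne), ?_, hmax s1 (π.min'_mem hne) s2 (π.max'_mem hne)⟩
    refine hsum.trans (Finset.sum_le_sum_of_subset_of_nonneg ?_ ?_)
    · intro i hi
      exact Finset.mem_Icc.mpr ⟨π.min'_le i hi, π.le_max' i hi⟩
    · intro i _ _
      linarith [hlen i]
  · rintro ⟨s1, s2, hle, hsum, hδ⟩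
    refine ⟨Finset.Icc s1 s2, Finset.nonempty_Icc.mpr hle, hsum, ?_⟩
    intro i hi j hj
    rw [Finset.mem_Icc] at hi hj
    have := hβmono j s2 hj.2
    have := hαmono s1 i hi.1
    linarith
end

section
/- For a user u with bandwidth ρ and MAR δ and ordered disjoint holes h_1,...,h_m, every feasible pattern whose leftmost hole is h_s is contained in the window W_s = {h_i : i ≥ s and β_i − α_s ≤ δ}; hence the minimum of Σ_{h∈π} y*_h over all feasible patterns for u equals the minimum over s of the MinKP optimum with item set W_s and demand ρ (minimizing only over those s for which the MinKP instance is feasible). -/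
open scoped Classical in
noncomputable def window {m : ℕ} (α β : Fin m → ℝ) (δ : ℝ) (s : Fin m) :
    Finset (Fin m) :=
  Finset.univ.filter fun i => s ≤ i ∧ β i - α s ≤ δ

theorem feasible_patterns_in_windows {m : ℕ} (α β : Fin m → ℝ)
    (hlen : ∀ i, α i ≤ β i) (hdisj : ∀ i j : Fin m, i < j → β i ≤ α j)
    (ρ δ : ℝ) (y : Fin m → ℝ) (hy : ∀ i, 0 ≤ y i) :
    (∀ π : Finset (Fin m), Feasible α β ρ δ π →
      ∀ s : Fin m, (s ∈ π ∧ ∀ i ∈ π, s ≤ i) → π ⊆ window α β δ s) ∧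
    {c : ℝ | ∃ π : Finset (Fin m), Feasible α β ρ δ π ∧ c = ∑ i ∈ π, y i} =
      {c : ℝ | ∃ (s : Fin m) (π : Finset (Fin m)), π ⊆ window α β δ s ∧
        π.Nonempty ∧ ρ ≤ ∑ i ∈ π, (β i - α i) ∧ c = ∑ i ∈ π, y i} := by
  classical
  have hmono : ∀ s i : Fin m, s ≤ i → α s ≤ α i := by
    intro s i hsi
    rcases eq_or_lt_of_le hsi with h | h
    · simp [h]
    · exact le_trans (hlen s) (hdisj s i h)
  have key : ∀ π : Finset (Fin m), Feasible α β ρ δ π →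
      ∀ s : Fin m, (s ∈ π ∧ ∀ i ∈ π, s ≤ i) → π ⊆ window α β δ s := by
    intro π hπ s ⟨hs, hmin⟩ i hi
    simp only [window, Finset.mem_filter, Finset.mem_univ, true_and]
    exact ⟨hmin i hi, hπ.2.2 s hs i hi⟩
  refine ⟨key, ?_⟩
  ext c
  simp only [Set.mem_setOf_eq]
  constructor
  · rintro ⟨π, hπ, rfl⟩
    have hne := hπ.1
    refine ⟨π.min' hne, π, key π hπ (π.min' hne) ⟨π.min'_mem hne, fun i hi => π.min'_le i hi⟩,
      hne, hπ.2.1, rfl⟩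
  · rintro ⟨s, π, hsub, hne, hρ, rfl⟩
    refine ⟨π, ⟨hne, hρ, ?_⟩, rfl⟩
    intro i hi j hj
    have hiw := hsub hi
    have hjw := hsub hj
    simp only [window, Finset.mem_filter, Finset.mem_univ, true_and] at hiw hjw
    have := hmono s i hiw.1
    linarith [hjw.2]
end
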